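/- Let X₁, X₂ be real Banach spaces and let A₁ : X₁ → X₁, A₂ : X₂ → X₂, B₁ : X₂ → X₁, B₂ : X₁ → X₂ be bounded linear operators. Define E_j(σ) = exp(−σA_j), X_j(σ) = (∫₀^σ exp(−sA_j) ds) ∘ B_j, the symmetric approximation T̂(σ)(x,y) = (E₁(σ)x + X₁(σ)y, X₂(σ)x + E₂(σ)y), and 𝓒(x,y) = (A₁x − B₁y, A₂y − B₂x). Then for every (x,y) ∈ X₁ × X₂ and every σ ≥ 0, the curve σ ↦ T̂(σ)(x,y) is differentiable with derivative T̂′(σ)(x,y) = −T̂(σ)(𝓒(x,y)) + ( X₁(σ)(−B₂x + A₂y), X₂(σ)(A₁x − B₁y) ); equivalently, T̂′(σ) + T̂(σ) ∘ 𝓒 is the block operator with diagonal blocks −X₁(σ)∘B₂ and −X₂(σ)∘B₁ and off-diagonal blocks X₁(σ)∘A₂ and X₂(σ)∘A₁. -/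

import Mathlib

noncomputable section

variable {X₁ X₂ : Type*} [NormedAddCommGroup X₁] [NormedSpace ℝ X₁] [CompleteSpace X₁]
  [NormedAddCommGroup X₂] [NormedSpace ℝ X₂] [CompleteSpace X₂]

/-- The operator exponential `exp (-σ A)` of a bounded operator `A`. -/
def expOp {X : Type*} [NormedAddCommGroup X] [NormedSpace ℝ X] [CompleteSpace X]
    (A : X →L[ℝ] X) (σ : ℝ) : X →L[ℝ] X :=
  NormedSpace.exp (-(σ • A))

/-- The coupling operator `X(σ) = (∫₀^σ exp(-s A) ds) ∘ B`. -/
def Xop {X Y : Type*} [NormedAddCommGroup X] [NormedSpace ℝ X] [CompleteSpace X]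
    [NormedAddCommGroup Y] [NormedSpace ℝ Y] (A : X →L[ℝ] X) (B : Y →L[ℝ] X) (σ : ℝ) :
    Y →L[ℝ] X :=
  (∫ s in (0:ℝ)..σ, expOp A s).comp B

/-- The symmetric approximation `T̂(σ)(x,y) = (E₁(σ)x + X₁(σ)y, X₂(σ)x + E₂(σ)y)`. -/
def Tsymp (A₁ : X₁ →L[ℝ] X₁) (A₂ : X₂ →L[ℝ] X₂) (B₁ : X₂ →L[ℝ] X₁) (B₂ : X₁ →L[ℝ] X₂)
    (σ : ℝ) : (X₁ × X₂) →L[ℝ] (X₁ × X₂) :=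
  ((expOp A₁ σ).coprod (Xop A₁ B₁ σ)).prod ((Xop A₂ B₂ σ).coprod (expOp A₂ σ))

/-- The full operator `𝓒(x,y) = (A₁x - B₁y, A₂y - B₂x)`. -/
def opCp (A₁ : X₁ →L[ℝ] X₁) (A₂ : X₂ →L[ℝ] X₂) (B₁ : X₂ →L[ℝ] X₁) (B₂ : X₁ →L[ℝ] X₂) :
    (X₁ × X₂) →L[ℝ] (X₁ × X₂) :=
  (A₁.coprod (-B₁)).prod ((-B₂).coprod A₂)

/-! Differentiate blockwise: `E(σ)' = -E(σ) A`, and `X(σ)' = E(σ) B` by the fundamental theorem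
of calculus. In `-T̂(σ) 𝓒` the `X`-blocks are exactly cancelled by the correction term, leaving
`(-E₁(σ) A₁ x + E₁(σ) B₁ y, E₂(σ) B₂ x - E₂(σ) A₂ y)`. -/

section Blocks

variable {X Y : Type*} [NormedAddCommGroup X] [NormedSpace ℝ X] [CompleteSpace X]
  [NormedAddCommGroup Y] [NormedSpace ℝ Y]

theorem hasDerivAt_expOp (A : X →L[ℝ] X) (σ : ℝ) :
    HasDerivAt (expOp A) (-(expOp A σ * A)) σ := by
  have h := hasDerivAt_exp_smul_const (𝕂 := ℝ) (-A) σ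
  simp only [smul_neg, mul_neg] at h
  exact h

theorem continuous_expOp (A : X →L[ℝ] X) : Continuous (expOp A) :=
  continuous_iff_continuousAt.2 fun σ => (hasDerivAt_expOp A σ).continuousAt

theorem hasDerivAt_Xop (A : X →L[ℝ] X) (B : Y →L[ℝ] X) (σ : ℝ) :
    HasDerivAt (Xop A B) ((expOp A σ).comp B) σ :=
  (((continuous_expOp A).integral_hasStrictDerivAt 0 σ).hasDerivAt.clm_comp
    (hasDerivAt_const σ B)).congr_deriv (by rw [ContinuousLinearMap.comp_zero, add_zero])

end Blocks

/-- The curve `σ ↦ T̂(σ)(x,y)` is differentiable with derivative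
`T̂′(σ)(x,y) = -T̂(σ)(𝓒(x,y)) + (X₁(σ)(-B₂x + A₂y), X₂(σ)(A₁x - B₁y))`. -/
theorem Tsymp_hasDerivAt (A₁ : X₁ →L[ℝ] X₁) (A₂ : X₂ →L[ℝ] X₂)
    (B₁ : X₂ →L[ℝ] X₁) (B₂ : X₁ →L[ℝ] X₂) :
    ∀ (x : X₁) (y : X₂), ∀ σ : ℝ, 0 ≤ σ →
      HasDerivAt (fun s : ℝ => Tsymp A₁ A₂ B₁ B₂ s (x, y))
        (-(Tsymp A₁ A₂ B₁ B₂ σ (opCp A₁ A₂ B₁ B₂ (x, y))) +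
          (Xop A₁ B₁ σ (-(B₂ x) + A₂ y), Xop A₂ B₂ σ (A₁ x - B₁ y))) σ := by
  intro x y σ _
  have hE₁ := (hasDerivAt_expOp A₁ σ).clm_apply (hasDerivAt_const σ x)
  have hE₂ := (hasDerivAt_expOp A₂ σ).clm_apply (hasDerivAt_const σ y)
  have hX₁ := (hasDerivAt_Xop A₁ B₁ σ).clm_apply (hasDerivAt_const σ y)
  have hX₂ := (hasDerivAt_Xop A₂ B₂ σ).clm_apply (hasDerivAt_const σ x)
  refine ((hE₁.add hX₁).prodMk (hX₂.add hE₂)).congr_deriv ?_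
  simp only [Tsymp, opCp, ContinuousLinearMap.prod_apply, ContinuousLinearMap.coprod_apply,
    ContinuousLinearMap.comp_apply, neg_apply, mul_apply_eq_comp, map_add, map_sub, map_neg,
    map_zero, add_zero, Prod.neg_mk, Prod.mk_add_mk, Prod.mk.injEq]
  constructor <;> abel
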